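/- Assume (A12, A22) is observable and (A, B) is controllable, and let K ∈ ℝ^{(n−p)×p}. Define A_d := [[0_{p×p}, A12],[0, A22 + K·A12]] ∈ ℝ^{n×n}, B_d := [[A11 − A12·K, B1],[A_K, K·B1 + B2]] ∈ ℝ^{n×(p+m)}, and C_d := [I_p, 0] ∈ ℝ^{p×n}. Then for every μ ∈ ℂ the complexified stacked matrix [A_d − μI_n; C_d] has full column rank n and the complexified matrix [A_d − μI_n, B_d] has full row rank n; that is, this order-n realization of K_d(λ) := [λ^{-1}·W, λ^{-1}·V] is observable and controllable, hence minimal. -/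

import Mathlib

open Matrix Polynomial

set_option synthInstance.maxHeartbeats 1000000
set_option maxHeartbeats 1000000

noncomputable section

/-- The field of real rational functions. -/
abbrev FF : Type := RatFunc ℝ

/-- The rational function `λ` (the image of the polynomial indeterminate `X`). -/
noncomputable def lam : FF := RatFunc.X

/-- Entrywise embedding of a real matrix into matrices over `FF`. -/
noncomputable def mapF {k l : Type} (M : Matrix k l ℝ) : Matrix k l FF :=
  M.map (algebraMap ℝ FF)

/-- The pencil `λ I - M` over `FF`, for a real square matrix `M`. -/
noncomputable def lamI {k : Type} [Fintype k] [DecidableEq k] (M : Matrix k k ℝ) :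
    Matrix k k FF := lam • (1 : Matrix k k FF) - mapF M

/-- Entrywise complexification of a real matrix. -/
def mapC {k l : Type} (M : Matrix k l ℝ) : Matrix k l ℂ :=
  M.map (algebraMap ℝ ℂ)

/-- A real rational function is stable if every complex root of its reduced denominator
has real part `< 0`. -/
def StableF (f : RatFunc ℝ) : Prop :=
  ∀ z : ℂ, ((f.denom).map (algebraMap ℝ ℂ)).IsRoot z → z.re < 0

/-- A real square matrix is Hurwitz if all roots of its characteristic polynomial
have real part `< 0`. -/
def IsHurwitz {k : Type} [Fintype k] [DecidableEq k] (M : Matrix k k ℝ) : Prop :=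
  ∀ z : ℂ, ((M.charpoly).map (algebraMap ℝ ℂ)).IsRoot z → z.re < 0

/-- `A_K := K A11 - K A12 K + A21 - A22 K`. -/
noncomputable def AKmat {p r : ℕ} (A11 : Matrix (Fin p) (Fin p) ℝ)
    (A12 : Matrix (Fin p) (Fin r) ℝ) (A21 : Matrix (Fin r) (Fin p) ℝ)
    (A22 : Matrix (Fin r) (Fin r) ℝ) (K : Matrix (Fin r) (Fin p) ℝ) :
    Matrix (Fin r) (Fin p) ℝ :=
  K * A11 - K * A12 * K + A21 - A22 * K

/-- The `W` member of the SRTR pair obtained from `K`. -/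
noncomputable def srtrW {p r : ℕ} (A11 : Matrix (Fin p) (Fin p) ℝ)
    (A12 : Matrix (Fin p) (Fin r) ℝ) (A21 : Matrix (Fin r) (Fin p) ℝ)
    (A22 : Matrix (Fin r) (Fin r) ℝ) (K : Matrix (Fin r) (Fin p) ℝ) :
    Matrix (Fin p) (Fin p) FF :=
  mapF (A11 - A12 * K) +
    mapF A12 * (lamI (A22 + K * A12))⁻¹ * mapF (AKmat A11 A12 A21 A22 K)

/-- The `V` member of the SRTR pair obtained from `K`. -/
noncomputable def srtrV {p r m : ℕ} (A12 : Matrix (Fin p) (Fin r) ℝ)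
    (A22 : Matrix (Fin r) (Fin r) ℝ) (B1 : Matrix (Fin p) (Fin m) ℝ)
    (B2 : Matrix (Fin r) (Fin m) ℝ) (K : Matrix (Fin r) (Fin p) ℝ) :
    Matrix (Fin p) (Fin m) FF :=
  mapF B1 + mapF A12 * (lamI (A22 + K * A12))⁻¹ * mapF (K * B1 + B2)

/-- The plant transfer function `G = [I_p 0] (λ I_n - A)⁻¹ B`. -/
noncomputable def plantG {p r m : ℕ} (A11 : Matrix (Fin p) (Fin p) ℝ)
    (A12 : Matrix (Fin p) (Fin r) ℝ) (A21 : Matrix (Fin r) (Fin p) ℝ)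
    (A22 : Matrix (Fin r) (Fin r) ℝ) (B1 : Matrix (Fin p) (Fin m) ℝ)
    (B2 : Matrix (Fin r) (Fin m) ℝ) : Matrix (Fin p) (Fin m) FF :=
  fromCols (1 : Matrix (Fin p) (Fin p) FF) (0 : Matrix (Fin p) (Fin r) FF) *
    (lamI (fromBlocks A11 A12 A21 A22))⁻¹ * mapF (fromRows B1 B2)

/-- `(A12, A22)` is observable: `[A22 - μ I ; A12]` has full column rank for all `μ : ℂ`. -/
def ObsPair {p r : ℕ} (A12 : Matrix (Fin p) (Fin r) ℝ)
    (A22 : Matrix (Fin r) (Fin r) ℝ) : Prop :=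
  ∀ μ : ℂ, (fromRows (mapC A22 - μ • (1 : Matrix (Fin r) (Fin r) ℂ)) (mapC A12)).rank = r

/-- `(A, B)` is controllable: `[A - μ I, B]` has full row rank for all `μ : ℂ`. -/
def CtrbPair {p r m : ℕ} (A : Matrix (Fin p ⊕ Fin r) (Fin p ⊕ Fin r) ℝ)
    (B : Matrix (Fin p ⊕ Fin r) (Fin m) ℝ) : Prop :=
  ∀ μ : ℂ, (fromCols (mapC A - μ • (1 : Matrix (Fin p ⊕ Fin r) (Fin p ⊕ Fin r) ℂ))
    (mapC B)).rank = p + r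

/-!
Both claims are Popov–Belevitch–Hautus tests at a fixed `μ`. For observability, a kernel vector
`(x₁, x₂)` of `[A_d - μ I; C_d]` has `x₁ = 0`, and then `A12 x₂ = 0` and `A22 x₂ = μ x₂`, so
`x₂ = 0` by observability of `(A12, A22)`. For controllability, let `T = [[I, 0], [K, I]]` and let
`F` be the first block column of `B_d`: then `(A_d + F C_d) T = T A` and the second block column
of `B_d` is `T B`. So if `y` annihilates `[A_d - μ I, B_d]`, then `y T` annihilates `[A - μ I, B]`,
whence `y T = 0` and `y = 0`.
-/

namespace Matrix

theorem rank_eq_card_iff_mulVec_eq_zero {m n R : Type*} [Fintype n] [Field R]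
    (M : Matrix m n R) : M.rank = Fintype.card n ↔ ∀ v, M *ᵥ v = 0 → v = 0 := by
  have h := LinearMap.finrank_range_add_finrank_ker M.mulVecLin
  rw [Module.finrank_fintype_fun_eq_card] at h
  rw [← ker_mulVecLin_eq_bot_iff, ← Submodule.finrank_eq_zero, rank]
  omega

theorem rank_eq_card_iff_vecMul_eq_zero {m n R : Type*} [Fintype m] [Fintype n] [Field R]
    (M : Matrix m n R) : M.rank = Fintype.card m ↔ ∀ v, v ᵥ* M = 0 → v = 0 := by
  simp only [← rank_transpose M, rank_eq_card_iff_mulVec_eq_zero, mulVec_transpose]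

theorem fromBlocks_sub_smul_one {m n R : Type*} [DecidableEq m] [DecidableEq n] [Ring R]
    (A : Matrix m m R) (B : Matrix m n R) (C : Matrix n m R) (D : Matrix n n R) (μ : R) :
    fromBlocks A B C D - μ • 1 = fromBlocks (A - μ • 1) B C (D - μ • 1) := by
  rw [← fromBlocks_one, fromBlocks_smul, ← sub_eq_zero]
  ext (i | i) (j | j) <;> simp

section Hautus

variable {ι κ R : Type*} [Fintype ι] [DecidableEq ι] [CommRing R]

def HautusObservableAt (A : Matrix ι ι R) (C : Matrix κ ι R) (μ : R) : Prop :=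
  ∀ x, fromRows (A - μ • 1) C *ᵥ x = 0 → x = 0

def HautusControllableAt (A : Matrix ι ι R) (B : Matrix ι κ R) (μ : R) : Prop :=
  ∀ y, y ᵥ* fromCols (A - μ • 1) B = 0 → y = 0

theorem HautusControllableAt.of_intertwining {q : Type*} [Fintype q] {A A' T : Matrix ι ι R}
    {B : Matrix ι κ R} {F : Matrix ι q R} {C : Matrix q ι R} {μ : R}
    (h : HautusControllableAt A B μ) (hT : IsUnit T) (hA : (A' + F * C) * T = T * A) :
    HautusControllableAt A' (fromCols F (T * B)) μ := by
  intro y hy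
  rw [vecMul_fromCols, vecMul_fromCols, ← Sum.elim_zero_zero, Sum.elim_eq_iff,
    ← Sum.elim_zero_zero, Sum.elim_eq_iff] at hy
  obtain ⟨hyA, hyF, hyB⟩ := hy
  have hyT : (y ᵥ* T) ᵥ* (A - μ • 1) = 0 :=
    calc (y ᵥ* T) ᵥ* (A - μ • 1) = y ᵥ* ((A' - μ • 1) * T + F * C * T) := by
          rw [vecMul_vecMul, mul_sub, ← hA]; congr 1; simp only [mul_smul_comm]; noncomm_ring
      _ = 0 := by
          rw [vecMul_add, ← vecMul_vecMul, hyA, ← vecMul_vecMul, ← vecMul_vecMul, hyF]; simp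
  have hyT0 : y ᵥ* T = 0 :=
    h _ (by rw [vecMul_fromCols, hyT, vecMul_vecMul, hyB, Sum.elim_zero_zero])
  exact vecMul_injective_of_isUnit hT (hyT0.trans (zero_vecMul T).symm)

theorem hautusObservableAt_iff_rank {R : Type*} [Field R] {A : Matrix ι ι R} {C : Matrix κ ι R}
    {μ : R} : HautusObservableAt A C μ ↔ (fromRows (A - μ • 1) C).rank = Fintype.card ι :=
  (rank_eq_card_iff_mulVec_eq_zero _).symm

theorem hautusControllableAt_iff_rank {R : Type*} [Field R] [Fintype κ] {A : Matrix ι ι R}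
    {B : Matrix ι κ R} {μ : R} :
    HautusControllableAt A B μ ↔ (fromCols (A - μ • 1) B).rank = Fintype.card ι :=
  (rank_eq_card_iff_vecMul_eq_zero _).symm

end Hautus

section Realization

variable {p r m R : Type*} [Fintype p] [DecidableEq p] [Fintype r] [DecidableEq r] [CommRing R]

theorem HautusObservableAt.realization {A12 : Matrix p r R} {A22 : Matrix r r R} {μ : R}
    (h : HautusObservableAt A22 A12 μ) (K : Matrix r p R) :
    HautusObservableAt (fromBlocks 0 A12 0 (A22 + K * A12)) (fromCols 1 (0 : Matrix p r R)) μ := by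
  intro x hx
  obtain ⟨x₁, x₂, rfl⟩ : ∃ x₁ x₂, x = Sum.elim x₁ x₂ := ⟨_, _, (Sum.elim_comp_inl_inr x).symm⟩
  rw [fromRows_mulVec, fromCols_mulVec_sumElim, fromBlocks_sub_smul_one, fromBlocks_mulVec,
    Sum.elim_comp_inl, Sum.elim_comp_inr, ← Sum.elim_zero_zero, Sum.elim_eq_iff,
    ← Sum.elim_zero_zero, Sum.elim_eq_iff] at hx
  simp only [one_mulVec, zero_mulVec, add_zero, zero_add] at hx
  obtain ⟨⟨hx₁, hx₂⟩, rfl⟩ := hx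
  rw [mulVec_zero, zero_add] at hx₁
  rw [add_sub_right_comm, add_mulVec, ← mulVec_mulVec, hx₁, mulVec_zero, add_zero] at hx₂
  rw [h x₂ (by rw [fromRows_mulVec, hx₁, hx₂, Sum.elim_zero_zero]), Sum.elim_zero_zero]

theorem HautusControllableAt.realization {A11 : Matrix p p R} {A12 : Matrix p r R}
    {A21 : Matrix r p R} {A22 : Matrix r r R} {B1 : Matrix p m R} {B2 : Matrix r m R} {μ : R}
    (h : HautusControllableAt (fromBlocks A11 A12 A21 A22) (fromRows B1 B2) μ) (K : Matrix r p R) :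
    HautusControllableAt (fromBlocks 0 A12 0 (A22 + K * A12))
      (fromBlocks (A11 - A12 * K) B1 (K * A11 - K * A12 * K + A21 - A22 * K) (K * B1 + B2)) μ := by
  set T : Matrix (p ⊕ r) (p ⊕ r) R := fromBlocks 1 0 K 1
  have hT : IsUnit T := by
    rw [isUnit_iff_isUnit_det, det_fromBlocks_zero₁₂]; simp
  have hB : fromRows B1 (K * B1 + B2) = T * fromRows B1 B2 := by
    rw [fromBlocks_mul_fromRows]; simp
  rw [← fromCols_fromRows_eq_fromBlocks (A11 - A12 * K), hB]
  refine h.of_intertwining (C := fromCols 1 (0 : Matrix p r R)) hT ?_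
  rw [fromRows_mul_fromCols, fromBlocks_add, fromBlocks_multiply, fromBlocks_multiply]
  congr 1 <;> simp only [Matrix.mul_zero, Matrix.zero_mul, Matrix.mul_one, Matrix.one_mul,
    Matrix.add_mul, Matrix.mul_assoc, add_zero, zero_add] <;> abel

end Realization

end Matrix

section Complexification

variable {k l o : Type}

theorem mapC_zero : mapC (0 : Matrix k l ℝ) = 0 := Matrix.map_zero _ (map_zero _)

theorem mapC_one [DecidableEq k] : mapC (1 : Matrix k k ℝ) = 1 :=
  Matrix.map_one _ (map_zero _) (map_one _)

theorem mapC_add (M N : Matrix k l ℝ) : mapC (M + N) = mapC M + mapC N :=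
  Matrix.map_add _ (map_add _) M N

theorem mapC_sub (M N : Matrix k l ℝ) : mapC (M - N) = mapC M - mapC N :=
  Matrix.map_sub _ (map_sub _) M N

theorem mapC_mul [Fintype l] (M : Matrix k l ℝ) (N : Matrix l o ℝ) :
    mapC (M * N) = mapC M * mapC N :=
  Matrix.map_mul

theorem mapC_fromBlocks {k' l' : Type} (A : Matrix k l ℝ) (B : Matrix k l' ℝ)
    (C : Matrix k' l ℝ) (D : Matrix k' l' ℝ) :
    mapC (fromBlocks A B C D) = fromBlocks (mapC A) (mapC B) (mapC C) (mapC D) :=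
  fromBlocks_map A B C D _

theorem mapC_fromRows {k' : Type} (A : Matrix k l ℝ) (B : Matrix k' l ℝ) :
    mapC (fromRows A B) = fromRows (mapC A) (mapC B) :=
  fromRows_map A B _

theorem mapC_fromCols {l' : Type} (A : Matrix k l ℝ) (B : Matrix k l' ℝ) :
    mapC (fromCols A B) = fromCols (mapC A) (mapC B) :=
  fromCols_map A B _

end Complexification

theorem stmt_12_general (p r m : ℕ)
    (A11 : Matrix (Fin p) (Fin p) ℝ) (A12 : Matrix (Fin p) (Fin r) ℝ)
    (A21 : Matrix (Fin r) (Fin p) ℝ) (A22 : Matrix (Fin r) (Fin r) ℝ)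
    (B1 : Matrix (Fin p) (Fin m) ℝ) (B2 : Matrix (Fin r) (Fin m) ℝ)
    (hobs : ObsPair A12 A22)
    (hctrb : CtrbPair (fromBlocks A11 A12 A21 A22) (fromRows B1 B2))
    (K : Matrix (Fin r) (Fin p) ℝ) :
    let Ad : Matrix (Fin p ⊕ Fin r) (Fin p ⊕ Fin r) ℝ :=
      fromBlocks 0 A12 0 (A22 + K * A12)
    let Bd : Matrix (Fin p ⊕ Fin r) (Fin p ⊕ Fin m) ℝ :=
      fromBlocks (A11 - A12 * K) B1 (AKmat A11 A12 A21 A22 K) (K * B1 + B2)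
    let Cd : Matrix (Fin p) (Fin p ⊕ Fin r) ℝ :=
      fromCols (1 : Matrix (Fin p) (Fin p) ℝ) (0 : Matrix (Fin p) (Fin r) ℝ)
    (∀ μ : ℂ, (fromRows (mapC Ad - μ • (1 : Matrix (Fin p ⊕ Fin r) (Fin p ⊕ Fin r) ℂ))
        (mapC Cd)).rank = p + r) ∧
    (∀ μ : ℂ, (fromCols (mapC Ad - μ • (1 : Matrix (Fin p ⊕ Fin r) (Fin p ⊕ Fin r) ℂ))
        (mapC Bd)).rank = p + r) := by
  intro Ad Bd Cd
  have hcard : Fintype.card (Fin p ⊕ Fin r) = p + r := by simp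
  refine ⟨fun μ => ?_, fun μ => ?_⟩
  · have h := (hautusObservableAt_iff_rank.2 (by simpa using hobs μ)).realization (mapC K)
    rw [← hcard, ← hautusObservableAt_iff_rank]
    simpa only [Ad, Cd, mapC_fromBlocks, mapC_fromCols, mapC_add, mapC_mul, mapC_zero, mapC_one]
      using h
  · have h : HautusControllableAt (fromBlocks (mapC A11) (mapC A12) (mapC A21) (mapC A22))
        (fromRows (mapC B1) (mapC B2)) μ := by
      rw [hautusControllableAt_iff_rank, ← mapC_fromBlocks, ← mapC_fromRows, hcard]
      exact hctrb μ
    replace h := h.realization (mapC K)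
    rw [← hcard, ← hautusControllableAt_iff_rank]
    simpa only [Ad, Bd, AKmat, mapC_fromBlocks, mapC_fromRows, mapC_add, mapC_sub, mapC_mul,
      mapC_zero] using h

/-- under observability and controllability, the order-`n` realization
`(A_d, B_d, C_d)` of `K_d(λ) = [λ⁻¹ W, λ⁻¹ V]` is observable and controllable,
hence minimal. -/
theorem stmt_12 (p r m : ℕ) (hp : 0 < p) (hr : 0 < r) (hm : 0 < m)
    (A11 : Matrix (Fin p) (Fin p) ℝ) (A12 : Matrix (Fin p) (Fin r) ℝ)
    (A21 : Matrix (Fin r) (Fin p) ℝ) (A22 : Matrix (Fin r) (Fin r) ℝ)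
    (B1 : Matrix (Fin p) (Fin m) ℝ) (B2 : Matrix (Fin r) (Fin m) ℝ)
    (hobs : ObsPair A12 A22)
    (hctrb : CtrbPair (fromBlocks A11 A12 A21 A22) (fromRows B1 B2))
    (K : Matrix (Fin r) (Fin p) ℝ) :
    let Ad : Matrix (Fin p ⊕ Fin r) (Fin p ⊕ Fin r) ℝ :=
      fromBlocks 0 A12 0 (A22 + K * A12)
    let Bd : Matrix (Fin p ⊕ Fin r) (Fin p ⊕ Fin m) ℝ :=
      fromBlocks (A11 - A12 * K) B1 (AKmat A11 A12 A21 A22 K) (K * B1 + B2)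
    let Cd : Matrix (Fin p) (Fin p ⊕ Fin r) ℝ :=
      fromCols (1 : Matrix (Fin p) (Fin p) ℝ) (0 : Matrix (Fin p) (Fin r) ℝ)
    (∀ μ : ℂ, (fromRows (mapC Ad - μ • (1 : Matrix (Fin p ⊕ Fin r) (Fin p ⊕ Fin r) ℂ))
        (mapC Cd)).rank = p + r) ∧
    (∀ μ : ℂ, (fromCols (mapC Ad - μ • (1 : Matrix (Fin p ⊕ Fin r) (Fin p ⊕ Fin r) ℂ))
        (mapC Bd)).rank = p + r) :=
  stmt_12_general p r m A11 A12 A21 A22 B1 B2 hobs hctrb K
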